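/- Let (T₁, v₁) and (T₂, v₂) be trees with distinguished vertices, and let (T₃, v₃) be obtained by taking the disjoint union of T₁ and T₂ and identifying v₁ with v₂ into a single vertex v₃. Then T₃ is a tree, a(T₃,v₃) = a(T₁,v₁)·a(T₂,v₂), and b(T₃,v₃) = b(T₁,v₁)·b(T₂,v₂). -/

import Mathlib

/-- The number of independent sets of `G` containing the vertex `v`. -/
noncomputable def aCount {V : Type*} (G : SimpleGraph V) (v : V) : ℕ :=
  Nat.card {s : Set V // v ∈ s ∧ ∀ x ∈ s, ∀ y ∈ s, ¬ G.Adj x y}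

/-- The number of independent sets of `G` not containing the vertex `v`
(including the empty set). -/
noncomputable def bCount {V : Type*} (G : SimpleGraph V) (v : V) : ℕ :=
  Nat.card {s : Set V // v ∉ s ∧ ∀ x ∈ s, ∀ y ∈ s, ¬ G.Adj x y}

/-- The graph obtained from the disjoint union of `G` and `G'` by identifying
`v ∈ V(G)` with `v' ∈ V(G')`.  Its vertex set is `V ⊕ {x : V' // x ≠ v'}`,
where `Sum.inl v` plays the role of the merged vertex. -/
def glue {V V' : Type*} (G : SimpleGraph V) (v : V) (G' : SimpleGraph V')
    (v' : V') : SimpleGraph (V ⊕ {x : V' // x ≠ v'}) where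
  Adj a b :=
    match a, b with
    | Sum.inl a, Sum.inl b => G.Adj a b
    | Sum.inl a, Sum.inr b => a = v ∧ G'.Adj v' b.1
    | Sum.inr a, Sum.inl b => b = v ∧ G'.Adj v' a.1
    | Sum.inr a, Sum.inr b => G'.Adj a.1 b.1
  symm := by
    constructor
    rintro (a | a) (b | b) h
    · exact G.adj_symm h
    · exact h
    · exact h
    · exact G'.adj_symm h
  loopless := by
    constructor
    rintro (a | a) h
    exacts [G.irrefl h, G'.irrefl h]

/-!
Both trees embed in the glued graph, and each embedding has a retraction that collapses the
other tree onto the merged vertex. A walk avoiding an edge of `T₁` retracts to a walk in `T₁`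
avoiding that edge, so bridges of `T₁` (and likewise of `T₂`) stay bridges; as every edge of
the glued graph comes from one of the two trees, it is acyclic.

An independent set of the glued graph is the same as a pair of independent sets of `T₁`, `T₂`
that agree on whether they contain the marked vertex, because every edge across the two
sides passes through it.
-/

namespace SimpleGraph

variable {V W : Type*} {G : SimpleGraph V} {H : SimpleGraph W}

theorem Reachable.map_of_adj_imp {f : V → W}
    (hf : ∀ ⦃x y⦄, G.Adj x y → f x = f y ∨ H.Adj (f x) (f y)) {x y : V}
    (h : G.Reachable x y) : H.Reachable (f x) (f y) := by
  rw [reachable_iff_reflTransGen] at h ⊢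
  refine Relation.ReflTransGen.lift' f (fun p q hpq => ?_) _ _ h
  change Relation.ReflTransGen H.Adj (f p) (f q)
  rcases hf hpq with heq | hadj
  · rw [heq]
  · exact .single hadj

theorem IsBridge.of_retraction (i : G ↪g H) (r : W → V) (hri : ∀ x, r (i x) = x)
    (hr : ∀ ⦃p q⦄, H.Adj p q → r p = r q ∨ i (r p) = p ∧ i (r q) = q) {a b : V}
    (h : G.IsBridge s(a, b)) : H.IsBridge s(i a, i b) := by
  rw [isBridge_iff] at h ⊢
  have hcollapse : ∀ ⦃p q⦄, (H.deleteEdges {s(i a, i b)}).Adj p q →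
      r p = r q ∨ (G.deleteEdges {s(a, b)}).Adj (r p) (r q) := by
    intro p q hpq
    rw [deleteEdges_adj, Set.mem_singleton_iff] at hpq ⊢
    rcases hr hpq.1 with heq | ⟨hp, hq⟩
    · exact Or.inl heq
    refine Or.inr ⟨i.map_adj_iff.mp (by rw [hp, hq]; exact hpq.1), fun he => hpq.2 ?_⟩
    rw [← hp, ← hq]
    simpa using congrArg (Sym2.map i) he
  exact fun hreach => h (by simpa only [hri] using hreach.map_of_adj_imp hcollapse)

theorem Hom.indep_preimage (f : G →g H) {s : Set W} (h : ∀ x ∈ s, ∀ y ∈ s, ¬ H.Adj x y) :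
    ∀ x ∈ f ⁻¹' s, ∀ y ∈ f ⁻¹' s, ¬ G.Adj x y :=
  fun _ hx _ hy hxy => h _ hx _ hy (f.map_adj hxy)

end SimpleGraph

abbrev MarkedIndepSet {V : Type*} (G : SimpleGraph V) (v : V) (P : Prop) : Type _ :=
  {s : Set V // (v ∈ s ↔ P) ∧ ∀ x ∈ s, ∀ y ∈ s, ¬ G.Adj x y}

theorem aCount_eq_card {V : Type*} (G : SimpleGraph V) (v : V) :
    aCount G v = Nat.card (MarkedIndepSet G v True) :=
  Nat.card_congr <| Equiv.subtypeEquivRight fun _ => by rw [iff_true]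

theorem bCount_eq_card {V : Type*} (G : SimpleGraph V) (v : V) :
    bCount G v = Nat.card (MarkedIndepSet G v False) :=
  Nat.card_congr <| Equiv.subtypeEquivRight fun _ => by rw [iff_false]

namespace glue

variable {V₁ V₂ : Type*} {T₁ : SimpleGraph V₁} {v₁ : V₁} {T₂ : SimpleGraph V₂} {v₂ : V₂}

@[simp] theorem adj_inl_inl {a b : V₁} :
    (glue T₁ v₁ T₂ v₂).Adj (.inl a) (.inl b) ↔ T₁.Adj a b := .rfl

@[simp] theorem adj_inl_inr {a : V₁} {b : {x : V₂ // x ≠ v₂}} :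
    (glue T₁ v₁ T₂ v₂).Adj (.inl a) (.inr b) ↔ a = v₁ ∧ T₂.Adj v₂ b := .rfl

@[simp] theorem adj_inr_inl {a : {x : V₂ // x ≠ v₂}} {b : V₁} :
    (glue T₁ v₁ T₂ v₂).Adj (.inr a) (.inl b) ↔ b = v₁ ∧ T₂.Adj v₂ a := .rfl

@[simp] theorem adj_inr_inr {a b : {x : V₂ // x ≠ v₂}} :
    (glue T₁ v₁ T₂ v₂).Adj (.inr a) (.inr b) ↔ T₂.Adj a b := .rfl

variable (T₁ v₁ T₂ v₂)

def inl : T₁ ↪g glue T₁ v₁ T₂ v₂ where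
  toFun := Sum.inl
  inj' := Sum.inl_injective
  map_rel_iff' := .rfl

def retractLeft {v₂ : V₂} : V₁ ⊕ {x : V₂ // x ≠ v₂} → V₁ := Sum.elim id fun _ => v₁

def retractRight {V₁ : Type*} : V₁ ⊕ {x : V₂ // x ≠ v₂} → V₂ := Sum.elim (fun _ => v₂) Subtype.val

open Classical in
noncomputable def inr : T₂ ↪g glue T₁ v₁ T₂ v₂ where
  toFun y := if h : y = v₂ then .inl v₁ else .inr ⟨y, h⟩
  inj' y z h := by
    by_cases hy : y = v₂ <;> by_cases hz : z = v₂ <;> simp_all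
  map_rel_iff' {a b} := by
    by_cases ha : a = v₂ <;> by_cases hb : b = v₂ <;> simp [ha, hb, T₂.adj_comm]

@[simp] theorem inl_apply (a : V₁) : inl T₁ v₁ T₂ v₂ a = .inl a := rfl

@[simp] theorem inr_self : inr T₁ v₁ T₂ v₂ v₂ = .inl v₁ := dif_pos rfl

@[simp] theorem inr_val (b : {x : V₂ // x ≠ v₂}) : inr T₁ v₁ T₂ v₂ b = .inr b := dif_neg b.2

theorem retractRight_inr (y : V₂) : retractRight v₂ (inr T₁ v₁ T₂ v₂ y) = y := by
  by_cases hy : y = v₂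
  · simp [hy, retractRight]
  · lift y to {x : V₂ // x ≠ v₂} using hy
    simp [retractRight]

variable {T₁ v₁ T₂ v₂}

theorem eq_of_retract_eq {p q : V₁ ⊕ {x : V₂ // x ≠ v₂}}
    (h₁ : retractLeft v₁ p = retractLeft v₁ q) (h₂ : retractRight v₂ p = retractRight v₂ q) : p = q := by
  rcases p with a | a <;> rcases q with b | b
  · simpa [retractLeft] using h₁
  · exact absurd h₂.symm b.2
  · exact absurd h₂ a.2
  · simpa [retractRight, Subtype.ext_iff] using h₂

theorem retractLeft_eq_or_of_adj ⦃p q : V₁ ⊕ {x : V₂ // x ≠ v₂}⦄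
    (h : (glue T₁ v₁ T₂ v₂).Adj p q) :
    retractLeft v₁ p = retractLeft v₁ q ∨
      inl T₁ v₁ T₂ v₂ (retractLeft v₁ p) = p ∧ inl T₁ v₁ T₂ v₂ (retractLeft v₁ q) = q := by
  rcases p with a | a <;> rcases q with b | b <;> simp_all [retractLeft]

theorem retractRight_eq_or_of_adj ⦃p q : V₁ ⊕ {x : V₂ // x ≠ v₂}⦄
    (h : (glue T₁ v₁ T₂ v₂).Adj p q) :
    retractRight v₂ p = retractRight v₂ q ∨
      inr T₁ v₁ T₂ v₂ (retractRight v₂ p) = p ∧ inr T₁ v₁ T₂ v₂ (retractRight v₂ q) = q := by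
  rcases p with a | a <;> rcases q with b | b <;> simp_all [retractRight]

theorem indep_sumEquiv_symm {s₁ : Set V₁} {s₂ : Set V₂} (hv : v₁ ∈ s₁ → v₂ ∈ s₂)
    (h₁ : ∀ x ∈ s₁, ∀ y ∈ s₁, ¬ T₁.Adj x y) (h₂ : ∀ x ∈ s₂, ∀ y ∈ s₂, ¬ T₂.Adj x y) :
    ∀ x ∈ Set.sumEquiv.symm (s₁, Subtype.val ⁻¹' s₂),
      ∀ y ∈ Set.sumEquiv.symm (s₁, Subtype.val ⁻¹' s₂), ¬ (glue T₁ v₁ T₂ v₂).Adj x y := by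
  rintro (a | a) ha (b | b) hb hab <;>
    simp only [Set.sumEquiv_symm_apply, Set.mem_union, Set.mem_image, Set.mem_preimage,
      Sum.inl.injEq, Sum.inr.injEq, reduceCtorEq, exists_eq_right, and_false, exists_false,
      or_false, false_or] at ha hb
  · exact h₁ a ha b hb hab
  · exact h₂ v₂ (hv (hab.1 ▸ ha)) b hb hab.2
  · exact h₂ a ha v₂ (hv (hab.1 ▸ hb)) (T₂.adj_symm hab.2)
  · exact h₂ a ha b hb hab

variable (T₁ v₁ T₂ v₂) in
noncomputable def markedIndepSetEquiv (P : Prop) :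
    MarkedIndepSet (glue T₁ v₁ T₂ v₂) (.inl v₁) P ≃
      MarkedIndepSet T₁ v₁ P × MarkedIndepSet T₂ v₂ P where
  toFun s :=
    (⟨inl T₁ v₁ T₂ v₂ ⁻¹' s.1, s.2.1, (inl T₁ v₁ T₂ v₂).toHom.indep_preimage s.2.2⟩,
      ⟨inr T₁ v₁ T₂ v₂ ⁻¹' s.1, by simpa using s.2.1,
        (inr T₁ v₁ T₂ v₂).toHom.indep_preimage s.2.2⟩)
  invFun p :=
    ⟨Set.sumEquiv.symm (p.1.1, Subtype.val ⁻¹' p.2.1), by simpa using p.1.2.1,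
      indep_sumEquiv_symm (fun h => p.2.2.1.mpr (p.1.2.1.mp h)) p.1.2.2 p.2.2.2⟩
  left_inv s := by
    have hright : Subtype.val ⁻¹' (inr T₁ v₁ T₂ v₂ ⁻¹' s.1) = Sum.inr ⁻¹' s.1 := by
      ext b
      simp
    refine Subtype.ext ?_
    change Set.sumEquiv.symm (Sum.inl ⁻¹' s.1, Subtype.val ⁻¹' (inr T₁ v₁ T₂ v₂ ⁻¹' s.1)) = s.1
    rw [hright]
    exact Set.sumEquiv.symm_apply_apply s.1
  right_inv p := by
    refine Prod.ext (Subtype.ext ?_) (Subtype.ext ?_)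
    · exact congrArg Prod.fst (Set.sumEquiv.apply_symm_apply (p.1.1, Subtype.val ⁻¹' p.2.1))
    · ext y
      by_cases hy : y = v₂
      · simpa [hy] using p.1.2.1.trans p.2.2.1.symm
      · lift y to {x : V₂ // x ≠ v₂} using hy
        simp

theorem card_markedIndepSet (P : Prop) :
    Nat.card (MarkedIndepSet (glue T₁ v₁ T₂ v₂) (.inl v₁) P) =
      Nat.card (MarkedIndepSet T₁ v₁ P) * Nat.card (MarkedIndepSet T₂ v₂ P) := by
  rw [Nat.card_congr (markedIndepSetEquiv T₁ v₁ T₂ v₂ P), Nat.card_prod]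

end glue

section

open SimpleGraph

variable {V₁ V₂ : Type*} {T₁ : SimpleGraph V₁} {T₂ : SimpleGraph V₂}

theorem glue_connected (h₁ : T₁.Preconnected) (v₁ : V₁) (h₂ : T₂.Preconnected) (v₂ : V₂) :
    (glue T₁ v₁ T₂ v₂).Connected := by
  refine (connected_iff_exists_forall_reachable _).mpr ⟨.inl v₁, ?_⟩
  rintro (a | b)
  · exact (h₁ v₁ a).map (glue.inl T₁ v₁ T₂ v₂).toHom
  · simpa using (h₂ v₂ b).map (glue.inr T₁ v₁ T₂ v₂).toHom

theorem glue_isAcyclic (h₁ : T₁.IsAcyclic) (v₁ : V₁) (h₂ : T₂.IsAcyclic) (v₂ : V₂) :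
    (glue T₁ v₁ T₂ v₂).IsAcyclic := by
  rw [isAcyclic_iff_forall_adj_isBridge] at h₁ h₂ ⊢
  intro x y hxy
  rcases glue.retractLeft_eq_or_of_adj hxy with hl | ⟨hx, hy⟩
  · rcases glue.retractRight_eq_or_of_adj hxy with hr | ⟨hx, hy⟩
    -- the two retractions jointly separate vertices, so no edge is collapsed by both
    · exact absurd (glue.eq_of_retract_eq hl hr) hxy.ne
    rw [← hx, ← hy]
    refine (h₂ ?_).of_retraction _ _ (glue.retractRight_inr T₁ v₁ T₂ v₂)
      glue.retractRight_eq_or_of_adj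
    rwa [← (glue.inr T₁ v₁ T₂ v₂).map_adj_iff, hx, hy]
  rw [← hx, ← hy]
  refine (h₁ ?_).of_retraction _ _ (fun _ => rfl) glue.retractLeft_eq_or_of_adj
  rwa [← (glue.inl T₁ v₁ T₂ v₂).map_adj_iff, hx, hy]

theorem glue_isTree (h₁ : T₁.IsTree) (v₁ : V₁) (h₂ : T₂.IsTree) (v₂ : V₂) :
    (glue T₁ v₁ T₂ v₂).IsTree :=
  ⟨glue_connected h₁.1.preconnected v₁ h₂.1.preconnected v₂,
    glue_isAcyclic h₁.2 v₁ h₂.2 v₂⟩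

end

theorem glue_trees_marked_counts_general {V₁ V₂ : Type*}
    (T₁ : SimpleGraph V₁) (v₁ : V₁) (T₂ : SimpleGraph V₂) (v₂ : V₂)
    (h₁ : T₁.IsTree) (h₂ : T₂.IsTree) :
    (glue T₁ v₁ T₂ v₂).IsTree ∧
    aCount (glue T₁ v₁ T₂ v₂) (Sum.inl v₁) = aCount T₁ v₁ * aCount T₂ v₂ ∧
    bCount (glue T₁ v₁ T₂ v₂) (Sum.inl v₁) = bCount T₁ v₁ * bCount T₂ v₂ := by
  refine ⟨glue_isTree h₁ v₁ h₂ v₂, ?_, ?_⟩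
  · simp only [aCount_eq_card, glue.card_markedIndepSet]
  · simp only [bCount_eq_card, glue.card_markedIndepSet]

/-- The product operation on marked trees: identifying the marked vertices
`v₁`, `v₂` of two trees `T₁`, `T₂` into a single vertex `v₃` yields a tree
`T₃` with `a(T₃,v₃) = a(T₁,v₁)·a(T₂,v₂)` and
`b(T₃,v₃) = b(T₁,v₁)·b(T₂,v₂)`. -/
theorem glue_trees_marked_counts {V₁ V₂ : Type*} [Fintype V₁] [Fintype V₂]
    (T₁ : SimpleGraph V₁) (v₁ : V₁) (T₂ : SimpleGraph V₂) (v₂ : V₂)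
    (h₁ : T₁.IsTree) (h₂ : T₂.IsTree) :
    (glue T₁ v₁ T₂ v₂).IsTree ∧
    aCount (glue T₁ v₁ T₂ v₂) (Sum.inl v₁) = aCount T₁ v₁ * aCount T₂ v₂ ∧
    bCount (glue T₁ v₁ T₂ v₂) (Sum.inl v₁) = bCount T₁ v₁ * bCount T₂ v₂ :=
  glue_trees_marked_counts_general T₁ v₁ T₂ v₂ h₁ h₂
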